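/- Let A ∈ ℝ^{N×d} satisfy RIP at levels k and 2k with constants δ_k, δ_{2k} < 1, and let x ∈ Ker(A) \ {0}. If U is the set of the k largest-magnitude entries of x, then ‖x‖₂ ≤ (1 + δ_{2k}/(1−δ_k)) · (1/√k) · ‖x‖₁. -/

import Mathlib

/-!
Sort the entries of `x` by decreasing magnitude and cut the positions into consecutive blocks
`T₀, T₁, …` of `k` indices. Since `A x = 0`, `A x_{T₀} = -∑_{j ≥ 1} A x_{T_j}`. RIP at level `k`
bounds `‖A x_{T₀}‖²` below by `(1 - δ_k) ‖x_{T₀}‖²`, and polarization with RIP at level `2k` bounds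
each `|⟪A x_{T₀}, A x_{T_j}⟫|` by `δ_{2k} ‖x_{T₀}‖ ‖x_{T_j}‖`; hence
`‖x_{T₀}‖₂ ≤ δ_{2k} / (1 - δ_k) · ∑_{j ≥ 1} ‖x_{T_j}‖₂`. Every entry on `T_{j+1}` is at most the
mean of `|x|` over `T_j`, so `‖x_{T_{j+1}}‖₂ ≤ ‖x_{T_j}‖₁ / √k` and `∑_{j ≥ 1} ‖x_{T_j}‖₂ ≤ ‖x‖₁ / √k`.
The triangle inequality `‖x‖₂ ≤ ‖x_{T₀}‖₂ + ∑_{j ≥ 1} ‖x_{T_j}‖₂` concludes.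
-/

open Finset Matrix

noncomputable def l1 {ι : Type*} [Fintype ι] (x : ι → ℝ) : ℝ := ∑ i, |x i|

noncomputable def l2 {ι : Type*} [Fintype ι] (x : ι → ℝ) : ℝ := Real.sqrt (∑ i, (x i) ^ 2)

open scoped Classical in
/-- `x` has at most `m` nonzero entries. -/
def sparse {ι : Type*} [Fintype ι] (m : ℕ) (x : ι → ℝ) : Prop :=
  (Finset.univ.filter (fun i => x i ≠ 0)).card ≤ m

/-- Restricted Isometry Property at level `m` with constant `δ`. -/
def RIP {N d : ℕ} (A : Matrix (Fin N) (Fin d) ℝ) (m : ℕ) (δ : ℝ) : Prop :=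
  ∀ x : Fin d → ℝ, sparse m x →
    (1 - δ) * (l2 x) ^ 2 ≤ (l2 (A.mulVec x)) ^ 2 ∧
    (l2 (A.mulVec x)) ^ 2 ≤ (1 + δ) * (l2 x) ^ 2

/-- Restriction of a vector to the coordinates in `S` (zero elsewhere). -/
def restr {d : ℕ} (S : Finset (Fin d)) (x : Fin d → ℝ) : Fin d → ℝ :=
  fun i => if i ∈ S then x i else 0

section Norms

variable {ι : Type*} [Fintype ι]

lemma l2_eq_norm (x : ι → ℝ) : l2 x = ‖WithLp.toLp 2 x‖ := by
  simp [l2, EuclideanSpace.norm_eq, Real.norm_eq_abs, sq_abs]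

lemma l2_nonneg (x : ι → ℝ) : 0 ≤ l2 x := Real.sqrt_nonneg _

lemma l2_sq (x : ι → ℝ) : l2 x ^ 2 = x ⬝ᵥ x := by
  rw [l2, Real.sq_sqrt (by positivity)]
  simp only [dotProduct, sq]

lemma l2_eq_zero {x : ι → ℝ} : l2 x = 0 ↔ x = 0 := by
  simp [l2_eq_norm]

lemma l2_neg (x : ι → ℝ) : l2 (-x) = l2 x := by
  simp [l2_eq_norm]

lemma l2_smul (c : ℝ) (x : ι → ℝ) : l2 (c • x) = |c| * l2 x := by
  simp [l2_eq_norm, norm_smul]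

lemma l2_add_sum_le {κ : Type*} (u : ι → ℝ) (s : Finset κ) (v : κ → ι → ℝ) :
    l2 (u + ∑ j ∈ s, v j) ≤ l2 u + ∑ j ∈ s, l2 (v j) := by
  simp only [l2_eq_norm, WithLp.toLp_add, WithLp.toLp_sum]
  exact (norm_add_le _ _).trans (add_le_add_right (norm_sum_le _ _) _)

end Norms

section Sparse

variable {ι : Type*} [Fintype ι] {m n : ℕ} {u v : ι → ℝ}

lemma sparse_iff_exists_finset :
    sparse m u ↔ ∃ S : Finset ι, #S ≤ m ∧ ∀ i, u i ≠ 0 → i ∈ S := by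
  classical
  constructor
  · exact fun h => ⟨_, h, fun i hi => by simpa using hi⟩
  · rintro ⟨S, hS, hu⟩
    exact (card_le_card fun i hi => hu i (by simpa using hi)).trans hS

lemma sparse_add (hu : sparse m u) (hv : sparse n v) : sparse (m + n) (u + v) := by
  classical
  obtain ⟨S, hS, hSu⟩ := sparse_iff_exists_finset.1 hu
  obtain ⟨T, hT, hTv⟩ := sparse_iff_exists_finset.1 hv
  refine sparse_iff_exists_finset.2 ⟨S ∪ T, (card_union_le S T).trans (add_le_add hS hT), ?_⟩
  intro i hi
  by_cases h : u i = 0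
  · exact mem_union_right _ (hTv i (by simpa [h] using hi))
  · exact mem_union_left _ (hSu i h)

lemma sparse_smul (c : ℝ) (hu : sparse m u) : sparse m (c • u) := by
  obtain ⟨S, hS, hSu⟩ := sparse_iff_exists_finset.1 hu
  exact sparse_iff_exists_finset.2 ⟨S, hS, fun i hi => hSu i (right_ne_zero_of_mul hi)⟩

lemma sparse_neg (hu : sparse m u) : sparse m (-u) := by
  simpa using sparse_smul (-1) hu

lemma sparse_sub (hu : sparse m u) (hv : sparse n v) : sparse (m + n) (u - v) := by
  simpa [sub_eq_add_neg] using sparse_add hu (sparse_neg hv)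

end Sparse

section Restriction

variable {d : ℕ} (S T : Finset (Fin d)) (x : Fin d → ℝ)

lemma sparse_restr {m : ℕ} (hS : #S ≤ m) : sparse m (restr S x) :=
  sparse_iff_exists_finset.2 ⟨S, hS, fun i hi => by by_contra h; simp [restr, h] at hi⟩

lemma l1_restr : l1 (restr S x) = ∑ i ∈ S, |x i| := by
  simp [l1, restr, apply_ite abs, sum_ite_mem]

lemma l2_restr : l2 (restr S x) = √(∑ i ∈ S, x i ^ 2) := by
  simp [l2, restr, apply_ite (· ^ 2), sum_ite_mem]

lemma restr_dotProduct_restr {S T} (h : Disjoint S T) : restr S x ⬝ᵥ restr T x = 0 := by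
  refine sum_eq_zero fun i _ => ?_
  by_cases hi : i ∈ S
  · simp [restr, disjoint_left.1 h hi]
  · simp [restr, hi]

end Restriction

namespace RIP

variable {N d m n : ℕ} {A : Matrix (Fin N) (Fin d) ℝ} {δ : ℝ} {u v : Fin d → ℝ}

lemma two_mul_dotProduct_mulVec_le (hR : RIP A (m + n) δ) (hu : sparse m u) (hv : sparse n v)
    (huv : u ⬝ᵥ v = 0) : 2 * (A *ᵥ u ⬝ᵥ A *ᵥ v) ≤ δ * (l2 u ^ 2 + l2 v ^ 2) := by
  have hadd := (hR (u + v) (sparse_add hu hv)).2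
  have hsub := (hR (u - v) (sparse_sub hu hv)).1
  simp only [l2_sq, mulVec_add, mulVec_sub, add_dotProduct, dotProduct_add, sub_dotProduct,
    dotProduct_sub, dotProduct_comm v u, dotProduct_comm (A *ᵥ v) (A *ᵥ u), huv] at hadd hsub ⊢
  linarith

lemma dotProduct_mulVec_le (hR : RIP A (m + n) δ) (hu : sparse m u) (hv : sparse n v)
    (huv : u ⬝ᵥ v = 0) : A *ᵥ u ⬝ᵥ A *ᵥ v ≤ δ * (l2 u * l2 v) := by
  rcases (mul_nonneg (l2_nonneg u) (l2_nonneg v)).eq_or_lt with h0 | hpos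
  · rw [← h0, mul_zero]
    rcases mul_eq_zero.1 h0.symm with h | h <;> simp [l2_eq_zero.1 h]
  -- rescale both vectors to the common norm `l2 u * l2 v`
  have h := two_mul_dotProduct_mulVec_le hR (sparse_smul (l2 v) hu) (sparse_smul (l2 u) hv)
    (by simp [huv])
  simp only [mulVec_smul, smul_dotProduct, dotProduct_smul, smul_eq_mul, l2_smul,
    abs_of_nonneg (l2_nonneg u), abs_of_nonneg (l2_nonneg v)] at h
  nlinarith

lemma abs_dotProduct_mulVec_le (hR : RIP A (m + n) δ) (hu : sparse m u) (hv : sparse n v)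
    (huv : u ⬝ᵥ v = 0) : |A *ᵥ u ⬝ᵥ A *ᵥ v| ≤ δ * (l2 u * l2 v) := by
  have hneg := dotProduct_mulVec_le hR hu (sparse_neg hv) (by simp [huv])
  rw [mulVec_neg, dotProduct_neg, l2_neg] at hneg
  exact abs_le.2 ⟨by linarith, dotProduct_mulVec_le hR hu hv huv⟩

lemma l2_le_of_mulVec_add_sum_eq_zero {κ : Type*} {k : ℕ} {δk : ℝ} (hRk : RIP A k δk)
    (hR : RIP A (k + m) δ) (hδk : δk < 1) (hδ : 0 ≤ δ) {s : Finset κ} {w : κ → Fin d → ℝ}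
    (hu : sparse k u) (hw : ∀ j ∈ s, sparse m (w j)) (huw : ∀ j ∈ s, u ⬝ᵥ w j = 0)
    (hker : A *ᵥ (u + ∑ j ∈ s, w j) = 0) :
    l2 u ≤ δ / (1 - δk) * ∑ j ∈ s, l2 (w j) := by
  set S := ∑ j ∈ s, l2 (w j)
  have hAu : A *ᵥ u = -∑ j ∈ s, A *ᵥ w j := by
    rw [mulVec_add, mulVec_sum] at hker
    exact eq_neg_of_add_eq_zero_left hker
  have hquad : (1 - δk) * l2 u ^ 2 ≤ δ * (l2 u * S) :=
    calc (1 - δk) * l2 u ^ 2 ≤ l2 (A *ᵥ u) ^ 2 := (hRk u hu).1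
      _ = ∑ j ∈ s, -(A *ᵥ u ⬝ᵥ A *ᵥ w j) := by
        rw [l2_sq]
        nth_rw 2 [hAu]
        rw [dotProduct_neg, dotProduct_sum, sum_neg_distrib]
      _ ≤ ∑ j ∈ s, δ * (l2 u * l2 (w j)) := sum_le_sum fun j hj =>
        (neg_le_abs _).trans (abs_dotProduct_mulVec_le hR hu (hw j hj) (huw j hj))
      _ = δ * (l2 u * S) := by rw [mul_sum, mul_sum]
  rw [div_mul_eq_mul_div, le_div_iff₀ (sub_pos.2 hδk)]
  rcases (l2_nonneg u).eq_or_lt with h0 | hpos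
  · rw [← h0, zero_mul]
    exact mul_nonneg hδ (sum_nonneg fun j _ => l2_nonneg _)
  · nlinarith

end RIP

lemma l2_restr_le_l1_restr_div_sqrt {d k : ℕ} (hk : 0 < k) {S T : Finset (Fin d)} (x : Fin d → ℝ)
    (hS : #S ≤ k) (hT : k ≤ #T) (hST : ∀ i ∈ S, ∀ i' ∈ T, |x i| ≤ |x i'|) :
    l2 (restr S x) ≤ l1 (restr T x) / √k := by
  set L := ∑ i' ∈ T, |x i'|
  have hk' : (0 : ℝ) < k := by exact_mod_cast hk
  have hentry : ∀ i ∈ S, |x i| * k ≤ L := fun i hi =>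
    calc |x i| * k ≤ |x i| * #T := by gcongr
      _ = ∑ _i' ∈ T, |x i| := by rw [sum_const, nsmul_eq_mul, mul_comm]
      _ ≤ L := sum_le_sum fun i' hi' => hST i hi i' hi'
  have hsq : (∑ i ∈ S, x i ^ 2) * k ≤ L ^ 2 := by
    refine le_of_mul_le_mul_right ?_ hk'
    calc (∑ i ∈ S, x i ^ 2) * k * k = ∑ i ∈ S, (|x i| * k) ^ 2 := by
          rw [sum_mul, sum_mul]
          exact sum_congr rfl fun i _ => by rw [mul_pow, sq_abs]; ring
      _ ≤ ∑ _i ∈ S, L ^ 2 := sum_le_sum fun i hi => pow_le_pow_left₀ (by positivity) (hentry i hi) 2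
      _ = #S * L ^ 2 := by rw [sum_const, nsmul_eq_mul]
      _ ≤ L ^ 2 * k := by rw [mul_comm]; gcongr
  rw [l2_restr, l1_restr, le_div_iff₀ (Real.sqrt_pos.2 hk'), ← Real.sqrt_mul (by positivity)]
  exact Real.sqrt_le_iff.2 ⟨by positivity, hsq⟩

section RankBlocks

variable {d : ℕ}

/-- With `σ p` the index at position `p`, block `j` holds the indices at positions
`j * k, …, j * k + k - 1`. -/
def rankBlock (σ : Equiv.Perm (Fin d)) (k j : ℕ) : Finset (Fin d) :=
  {i | (σ.symm i : ℕ) / k = j}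

variable (σ : Equiv.Perm (Fin d)) {k : ℕ}

lemma card_rankBlock (hk : 0 < k) (j : ℕ) :
    #(rankBlock σ k j) = min (j * k + k) d - j * k := by
  have hpos : ({p : Fin d | (p : ℕ) / k = j} : Finset (Fin d)).map Fin.valEmbedding =
      Ico (j * k) (min (j * k + k) d) := by
    ext n
    simp only [mem_map, mem_filter, mem_univ, true_and, Fin.valEmbedding_apply, mem_Ico,
      Nat.div_eq_iff hk]
    constructor
    · rintro ⟨p, hp, rfl⟩
      omega
    · intro hn
      exact ⟨⟨n, by omega⟩, by simp only; omega, rfl⟩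
  rw [card_equiv σ.symm (t := {p : Fin d | (p : ℕ) / k = j}) (by simp [rankBlock]), ← card_map,
    hpos, Nat.card_Ico]

lemma card_rankBlock_le (hk : 0 < k) (j : ℕ) : #(rankBlock σ k j) ≤ k := by
  rw [card_rankBlock σ hk]
  omega

lemma disjoint_rankBlock {j j' : ℕ} (h : j ≠ j') : Disjoint (rankBlock σ k j) (rankBlock σ k j') :=
  disjoint_filter.2 fun _ _ hj hj' => h (hj.symm.trans hj')

lemma sum_range_ite_mem_rankBlock {M : Type*} [AddCommMonoid M] (k : ℕ) {m : ℕ} (hm : d ≤ m)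
    (i : Fin d) (a : M) : ∑ j ∈ range m, (if i ∈ rankBlock σ k j then a else 0) = a := by
  simp only [rankBlock, mem_filter, mem_univ, true_and]
  rw [sum_ite_eq, if_pos (mem_range.2 ((Nat.div_le_self _ _).trans_lt ((σ.symm i).isLt.trans_le hm)))]

lemma sum_restr_rankBlock (k : ℕ) {m : ℕ} (hm : d ≤ m) (x : Fin d → ℝ) :
    ∑ j ∈ range m, restr (rankBlock σ k j) x = x := by
  ext i
  simp only [Finset.sum_apply, restr]
  exact sum_range_ite_mem_rankBlock σ k hm i (x i)

lemma sum_l1_restr_rankBlock (k : ℕ) (x : Fin d → ℝ) :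
    ∑ j ∈ range d, l1 (restr (rankBlock σ k j) x) = l1 x := by
  simp only [l1, restr, apply_ite abs, abs_zero]
  rw [sum_comm]
  exact sum_congr rfl fun i _ => sum_range_ite_mem_rankBlock σ k le_rfl i |x i|

lemma restr_rankBlock_zero_add_sum (k : ℕ) (x : Fin d → ℝ) :
    restr (rankBlock σ k 0) x + ∑ j ∈ range d, restr (rankBlock σ k (j + 1)) x = x := by
  rw [add_comm, ← sum_range_succ' (fun j => restr (rankBlock σ k j) x),
    sum_restr_rankBlock σ k (Nat.le_succ d)]

variable {σ} {x : Fin d → ℝ}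

lemma l2_restr_rankBlock_succ_le (hσ : Antitone fun p => |x (σ p)|) (hk : 0 < k) (j : ℕ) :
    l2 (restr (rankBlock σ k (j + 1)) x) ≤ l1 (restr (rankBlock σ k j) x) / √k := by
  have hcard := card_rankBlock σ hk
  by_cases hfull : (j + 1) * k < d
  · refine l2_restr_le_l1_restr_div_sqrt hk x (card_rankBlock_le σ hk _) ?_ fun i hi i' hi' => ?_
    · rw [hcard, add_mul, one_mul] at *
      omega
    · simp only [rankBlock, mem_filter, mem_univ, true_and] at hi hi'
      have hle : σ.symm i' ≤ σ.symm i := by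
        by_contra! h
        have := Nat.div_le_div_right (c := k) h.le
        omega
      simpa using hσ hle
  · have hempty : rankBlock σ k (j + 1) = ∅ := by
      rw [← card_eq_zero, hcard, add_mul, one_mul] at *
      omega
    rw [hempty, l2_restr, sum_empty, Real.sqrt_zero, l1_restr]
    positivity

lemma sum_l2_restr_rankBlock_succ_le (hσ : Antitone fun p => |x (σ p)|) (hk : 0 < k) :
    ∑ j ∈ range d, l2 (restr (rankBlock σ k (j + 1)) x) ≤ l1 x / √k :=
  calc _ ≤ ∑ j ∈ range d, l1 (restr (rankBlock σ k j) x) / √k :=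
        sum_le_sum fun j _ => l2_restr_rankBlock_succ_le hσ hk j
    _ = l1 x / √k := by rw [← sum_div, sum_l1_restr_rankBlock]

end RankBlocks

theorem stmt7_general {N d k : ℕ} (hk : 1 ≤ k) (A : Matrix (Fin N) (Fin d) ℝ)
    (δk δ2k : ℝ) (hδk1 : δk < 1) (hδ2k0 : 0 ≤ δ2k)
    (hRk : RIP A k δk) (hR2k : RIP A (2 * k) δ2k)
    (x : Fin d → ℝ) (hker : A.mulVec x = 0) :
    l2 x ≤ (1 + δ2k / (1 - δk)) * (1 / Real.sqrt k) * l1 x := by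
  obtain ⟨σ, hσ⟩ : ∃ σ : Equiv.Perm (Fin d), Antitone fun p => |x (σ p)| :=
    ⟨Tuple.sort fun i => -|x i|, fun p q hpq => neg_le_neg_iff.1 (Tuple.monotone_sort (fun i => -|x i|) hpq)⟩
  set head := restr (rankBlock σ k 0) x
  set tail := fun j => restr (rankBlock σ k (j + 1)) x
  have hx : head + ∑ j ∈ range d, tail j = x := restr_rankBlock_zero_add_sum σ k x
  have htail : ∑ j ∈ range d, l2 (tail j) ≤ l1 x / √k := sum_l2_restr_rankBlock_succ_le hσ hk
  have hhead : l2 head ≤ δ2k / (1 - δk) * ∑ j ∈ range d, l2 (tail j) :=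
    RIP.l2_le_of_mulVec_add_sum_eq_zero hRk (two_mul k ▸ hR2k) hδk1 hδ2k0
      (sparse_restr _ x (card_rankBlock_le σ hk 0))
      (fun j _ => sparse_restr _ x (card_rankBlock_le σ hk (j + 1)))
      (fun j _ => restr_dotProduct_restr x (disjoint_rankBlock σ (Nat.succ_ne_zero j).symm))
      (hx ▸ hker)
  have hc : 0 ≤ δ2k / (1 - δk) := div_nonneg hδ2k0 (sub_pos.2 hδk1).le
  calc l2 x ≤ l2 head + ∑ j ∈ range d, l2 (tail j) := hx ▸ l2_add_sum_le _ _ _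
    _ ≤ (1 + δ2k / (1 - δk)) * ∑ j ∈ range d, l2 (tail j) := by linarith
    _ ≤ (1 + δ2k / (1 - δk)) * (l1 x / √k) := by gcongr
    _ = (1 + δ2k / (1 - δk)) * (1 / Real.sqrt k) * l1 x := by ring

theorem stmt7 {N d k : ℕ} (hk : 1 ≤ k) (A : Matrix (Fin N) (Fin d) ℝ)
    (δk δ2k : ℝ) (hδk0 : 0 ≤ δk) (hδk1 : δk < 1) (hδ2k0 : 0 ≤ δ2k) (hδ2k1 : δ2k < 1)
    (hRk : RIP A k δk) (hR2k : RIP A (2 * k) δ2k)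
    (x : Fin d → ℝ) (hker : A.mulVec x = 0) (hx : x ≠ 0) :
    l2 x ≤ (1 + δ2k / (1 - δk)) * (1 / Real.sqrt k) * l1 x :=
  stmt7_general hk A δk δ2k hδk1 hδ2k0 hRk hR2k x hker
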